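/- arXiv:quant-ph/0402056 — 4 statements merged into one kernel-verified Lean document; each statement's English description precedes it below -/
import Mathlib

section
/- Let Φ : M_n(ℂ) → M_n(ℂ) be defined by Φ(T) = Σ_k A_k T A_k† where the A_k satisfy Σ_k A_k† A_k = 1 and Σ_k A_k A_k† = 1. If P is an orthogonal projection such that PH is invariant for every A_k (i.e., A_k P = P A_k P for all k), then P commutes with every A_k (i.e., A_k P = P A_k for all k). -/
open Matrix BigOperators

lemma trace_ct_mul {n : ℕ} (M : Matrix (Fin n) (Fin n) ℂ) :
    trace (Mᴴ * M) = ((∑ j, ∑ i, Complex.normSq (M i j) : ℝ) : ℂ) := by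
  simp only [trace, diag, mul_apply, conjTranspose_apply]
  push_cast
  congr 1
  ext j
  congr 1
  ext i
  rw [Complex.normSq_eq_conj_mul_self]
  rfl

theorem stmt0 {n m : ℕ} (A : Fin m → Matrix (Fin n) (Fin n) ℂ)
    (htp : ∑ k, (A k)ᴴ * A k = 1) (hu : ∑ k, A k * (A k)ᴴ = 1)
    (P : Matrix (Fin n) (Fin n) ℂ) (hP1 : Pᴴ = P) (hP2 : P * P = P)
    (hinv : ∀ k, A k * P = P * (A k * P)) :
    ∀ k, A k * P = P * A k := by
  set Q : Matrix (Fin n) (Fin n) ℂ := 1 - P with hQ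
  have hQ2 : Q * Q = Q := by
    simp [hQ, sub_mul, mul_sub, hP2]
  have hQH : Qᴴ = Q := by simp [hQ, hP1]
  set B : Fin m → Matrix (Fin n) (Fin n) ℂ := fun k => P * (A k) * Q with hB
  have hBB : ∀ k, (B k)ᴴ * B k = Q * ((A k)ᴴ * (P * (A k * Q))) := by
    intro k
    simp only [hB, conjTranspose_mul, hQH, hP1]
    simp only [mul_assoc]
    rw [← mul_assoc P P, hP2]
  -- trace of each term
  have h1 : ∀ k, trace ((B k)ᴴ * B k) =
      trace ((A k)ᴴ * (P * A k)) - trace ((A k)ᴴ * (P * (A k * P))) := by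
    intro k
    rw [hBB k, trace_mul_comm]
    simp only [mul_assoc]
    rw [hQ2]
    simp only [hQ, mul_sub, mul_one, sub_mul, trace_sub]
  -- sum of traces is zero
  have htr : ∑ k, trace ((B k)ᴴ * B k) = 0 := by
    simp only [h1, Finset.sum_sub_distrib]
    have h2 : ∑ k, trace ((A k)ᴴ * (P * A k)) = trace P := by
      have e : ∀ k, trace ((A k)ᴴ * (P * A k)) = trace (P * (A k * (A k)ᴴ)) := by
        intro k
        rw [trace_mul_comm, mul_assoc]
      simp only [e, ← trace_sum, ← Finset.mul_sum, hu, mul_one]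
    have h3 : ∑ k, trace ((A k)ᴴ * (P * (A k * P))) = trace P := by
      have e : ∀ k, (A k)ᴴ * (P * (A k * P)) = (A k)ᴴ * A k * P := by
        intro k
        rw [← hinv k, ← mul_assoc]
      simp only [e, ← trace_sum, ← Finset.sum_mul, htp, one_mul]
    rw [h2, h3, sub_self]
  -- each B k = 0
  have hB0 : ∀ k, B k = 0 := by
    have hre : ∑ k, (∑ j, ∑ i, Complex.normSq (B k i j) : ℝ) = 0 := by
      have h := htr
      simp only [trace_ct_mul] at h
      exact_mod_cast h
    have hnn : ∀ k ∈ Finset.univ, (0:ℝ) ≤ ∑ j, ∑ i, Complex.normSq (B k i j) := by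
      intro k _; exact Finset.sum_nonneg fun _ _ => Finset.sum_nonneg fun _ _ => Complex.normSq_nonneg _
    intro k
    have hk : (∑ j, ∑ i, Complex.normSq (B k i j) : ℝ) = 0 :=
      (Finset.sum_eq_zero_iff_of_nonneg hnn).1 hre k (Finset.mem_univ k)
    ext i j
    have hj : ∀ j ∈ Finset.univ, (0:ℝ) ≤ ∑ i, Complex.normSq (B k i j) := by
      intro j _; exact Finset.sum_nonneg fun _ _ => Complex.normSq_nonneg _
    have hkj : (∑ i, Complex.normSq (B k i j) : ℝ) = 0 :=
      (Finset.sum_eq_zero_iff_of_nonneg hj).1 hk j (Finset.mem_univ j)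
    have hi : ∀ i ∈ Finset.univ, (0:ℝ) ≤ Complex.normSq (B k i j) := by
      intro i _; exact Complex.normSq_nonneg _
    have h0 : Complex.normSq (B k i j) = 0 :=
      (Finset.sum_eq_zero_iff_of_nonneg hi).1 hkj i (Finset.mem_univ i)
    simpa using Complex.normSq_eq_zero.1 h0
  intro k
  have h := hB0 k
  have hPA : P * A k - P * A k * P = 0 := by
    have h' : P * A k * Q = 0 := h
    simpa [hQ, mul_sub, mul_one] using h'
  have h1' : P * A k = P * A k * P := sub_eq_zero.mp hPA
  have h2' : P * A k * P = A k * P := by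
    rw [mul_assoc]; exact (hinv k).symm
  rw [h1', h2']
end

section
/- Let Φ(T) = Σ_k A_k T A_k† be a unital trace-preserving completely positive map on M_n(ℂ). Then the fixed point set Fix(Φ) = {T : Φ(T) = T} equals the commutant {T : T A_k = A_k T for all k}. -/
open Matrix BigOperators

lemma stmt6_aux {m n : ℕ} (D : Fin m → Matrix (Fin n) (Fin n) ℂ)
    (h : ∑ k, Matrix.trace (D k * (D k)ᴴ) = 0) : ∀ k, D k = 0 := by
  have h' : ∑ k, ∑ i, ∑ j, (Complex.normSq (D k i j) : ℂ) = 0 := by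
    rw [← h]
    refine Finset.sum_congr rfl fun k _ => ?_
    simp [Matrix.trace, Matrix.mul_apply, Matrix.conjTranspose_apply, Matrix.diag,
      Complex.mul_conj]
  have h2 : ∑ k, ∑ i, ∑ j, Complex.normSq (D k i j) = 0 := by
    exact_mod_cast h' ▸ (by push_cast; ring :
      (((∑ k, ∑ i, ∑ j, Complex.normSq (D k i j) : ℝ)) : ℂ) =
        ∑ k, ∑ i, ∑ j, (Complex.normSq (D k i j) : ℂ))
  intro k
  ext i j
  have hk := (Finset.sum_eq_zero_iff_of_nonneg (fun k _ =>
    Finset.sum_nonneg fun i _ => Finset.sum_nonneg fun j _ => Complex.normSq_nonneg _)).mp h2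
    k (Finset.mem_univ k)
  have hi := (Finset.sum_eq_zero_iff_of_nonneg (fun i _ =>
    Finset.sum_nonneg fun j _ => Complex.normSq_nonneg _)).mp hk i (Finset.mem_univ i)
  have hj := (Finset.sum_eq_zero_iff_of_nonneg (fun j _ =>
    Complex.normSq_nonneg _)).mp hi j (Finset.mem_univ j)
  simpa [Complex.normSq_eq_zero] using hj

theorem stmt6 {n m : ℕ} (A : Fin m → Matrix (Fin n) (Fin n) ℂ)
    (htp : ∑ k, (A k)ᴴ * A k = 1) (hu : ∑ k, A k * (A k)ᴴ = 1) :
    {T : Matrix (Fin n) (Fin n) ℂ | ∑ k, A k * T * (A k)ᴴ = T} =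
      {T : Matrix (Fin n) (Fin n) ℂ | ∀ k, T * A k = A k * T} := by
  ext T
  simp only [Set.mem_setOf_eq]
  constructor
  · intro hT
    have hT' : ∑ k, A k * Tᴴ * (A k)ᴴ = Tᴴ := by
      have := congrArg Matrix.conjTranspose hT
      simpa [Matrix.conjTranspose_sum, Matrix.conjTranspose_mul, Matrix.mul_assoc] using this
    have hmat : ∑ j, (A j * T - T * A j) * (A j * T - T * A j)ᴴ
        = (∑ j, A j * (T * Tᴴ) * (A j)ᴴ) - T * Tᴴ := by
      calc ∑ j, (A j * T - T * A j) * (A j * T - T * A j)ᴴ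
          = ∑ j, (A j * (T * Tᴴ) * (A j)ᴴ - (A j * T * (A j)ᴴ) * Tᴴ
              - T * (A j * Tᴴ * (A j)ᴴ) + T * ((A j * (A j)ᴴ) * Tᴴ)) :=
            Finset.sum_congr rfl fun j _ => by
              simp only [Matrix.conjTranspose_sub, Matrix.conjTranspose_mul]
              noncomm_ring
        _ = (∑ j, A j * (T * Tᴴ) * (A j)ᴴ) - (∑ j, A j * T * (A j)ᴴ) * Tᴴ
              - T * (∑ j, A j * Tᴴ * (A j)ᴴ) + T * ((∑ j, A j * (A j)ᴴ) * Tᴴ) := by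
            rw [Finset.sum_add_distrib, Finset.sum_sub_distrib, Finset.sum_sub_distrib,
              ← Finset.sum_mul, ← Finset.mul_sum, ← Finset.mul_sum, ← Finset.sum_mul]
        _ = (∑ j, A j * (T * Tᴴ) * (A j)ᴴ) - T * Tᴴ := by
            rw [hT, hT', hu, Matrix.one_mul]
            noncomm_ring
    have htr : ∑ j, Matrix.trace ((A j * T - T * A j) * (A j * T - T * A j)ᴴ) = 0 := by
      rw [← Matrix.trace_sum, hmat, Matrix.trace_sub]
      have key : Matrix.trace (∑ j, A j * (T * Tᴴ) * (A j)ᴴ) = Matrix.trace (T * Tᴴ) := by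
        rw [Matrix.trace_sum]
        calc ∑ j, Matrix.trace (A j * (T * Tᴴ) * (A j)ᴴ)
            = ∑ j, Matrix.trace ((A j)ᴴ * A j * (T * Tᴴ)) := by
              refine Finset.sum_congr rfl fun j _ => ?_
              rw [Matrix.trace_mul_cycle]
          _ = Matrix.trace ((∑ j, (A j)ᴴ * A j) * (T * Tᴴ)) := by
              rw [← Matrix.trace_sum, ← Finset.sum_mul]
          _ = Matrix.trace (T * Tᴴ) := by rw [htp, Matrix.one_mul]
      rw [key, sub_self]
    intro k
    have := stmt6_aux (fun j => A j * T - T * A j) htr k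
    have h0 : A k * T - T * A k = 0 := this
    have := sub_eq_zero.mp h0
    exact this.symm
  · intro h
    calc ∑ k, A k * T * (A k)ᴴ = ∑ k, T * (A k * (A k)ᴴ) := by
          refine Finset.sum_congr rfl fun k _ => ?_
          rw [← h k, Matrix.mul_assoc]
      _ = T * ∑ k, A k * (A k)ᴴ := (Finset.mul_sum _ _ _).symm
      _ = T := by rw [hu, Matrix.mul_one]
end

section
/- Let Φ be a unital trace-preserving completely positive map on M_n(ℂ) with Kraus operators A_1,…,A_m. Then the fixed point set Fix(Φ) is closed under adjoints and under products: if Φ(S) = S and Φ(T) = T then Φ(S†) = S† and Φ(ST) = ST. -/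
open Matrix BigOperators

lemma trace_mul_conjTranspose_self' {n : ℕ} (M : Matrix (Fin n) (Fin n) ℂ) :
    (M * Mᴴ).trace = ((∑ i, ∑ j, Complex.normSq (M i j) : ℝ) : ℂ) := by
  simp [Matrix.trace, Matrix.diag, Matrix.mul_apply, Matrix.conjTranspose_apply,
    Complex.mul_conj]

lemma eq_zero_of_sum_trace_zero {n m : ℕ} (B : Fin m → Matrix (Fin n) (Fin n) ℂ)
    (h : ∑ k, (B k * (B k)ᴴ).trace = 0) : ∀ k, B k = 0 := by
  have h' : ∑ k, (∑ i, ∑ j, Complex.normSq (B k i j) : ℝ) = 0 := by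
    have h2 := h
    simp_rw [trace_mul_conjTranspose_self'] at h2
    exact_mod_cast h2
  intro k
  have hk : (∑ i, ∑ j, Complex.normSq (B k i j) : ℝ) = 0 :=
    (Finset.sum_eq_zero_iff_of_nonneg (fun k _ =>
      Finset.sum_nonneg fun _ _ => Finset.sum_nonneg fun _ _ => Complex.normSq_nonneg _)).mp
      h' k (Finset.mem_univ k)
  ext i j
  have hi := (Finset.sum_eq_zero_iff_of_nonneg (fun i _ =>
    Finset.sum_nonneg fun _ _ => Complex.normSq_nonneg _)).mp hk i (Finset.mem_univ i)
  have hj := (Finset.sum_eq_zero_iff_of_nonneg (fun j _ =>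
    Complex.normSq_nonneg _)).mp hi j (Finset.mem_univ j)
  simpa using Complex.normSq_eq_zero.mp hj

lemma key_trace_zero {n m : ℕ} (A : Fin m → Matrix (Fin n) (Fin n) ℂ)
    (htp : ∑ k, (A k)ᴴ * A k = 1) (hu : ∑ k, A k * (A k)ᴴ = 1)
    (S : Matrix (Fin n) (Fin n) ℂ)
    (hS : ∑ k, A k * S * (A k)ᴴ = S) :
    ∑ k, ((A k * S - S * A k) * (A k * S - S * A k)ᴴ).trace = 0 := by
  have expand : ∀ k : Fin m, ((A k * S - S * A k) * (A k * S - S * A k)ᴴ).trace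
      = ((A k)ᴴ * A k * (S * Sᴴ)).trace - ((A k * S * (A k)ᴴ) * Sᴴ).trace
        - (S * A k * Sᴴ * (A k)ᴴ).trace + (S * (A k * (A k)ᴴ) * Sᴴ).trace := by
    intro k
    have h1 : (A k * S - S * A k)ᴴ = Sᴴ * (A k)ᴴ - (A k)ᴴ * Sᴴ := by
      simp [conjTranspose_sub, conjTranspose_mul]
    rw [h1, show (A k * S - S * A k) * (Sᴴ * (A k)ᴴ - (A k)ᴴ * Sᴴ)
        = A k * (S * Sᴴ) * (A k)ᴴ - (A k * S * (A k)ᴴ) * Sᴴ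
          - S * A k * Sᴴ * (A k)ᴴ + S * (A k * (A k)ᴴ) * Sᴴ by noncomm_ring]
    rw [trace_add, trace_sub, trace_sub, trace_mul_cycle (A k) (S * Sᴴ) (A k)ᴴ]
  have e1 : ∑ k, ((A k)ᴴ * A k * (S * Sᴴ)).trace = (S * Sᴴ).trace := by
    rw [← trace_sum, ← Finset.sum_mul, htp, one_mul]
  have e2 : ∑ k, ((A k * S * (A k)ᴴ) * Sᴴ).trace = (S * Sᴴ).trace := by
    rw [← trace_sum, ← Finset.sum_mul, hS]
  have e3 : ∑ k, (S * A k * Sᴴ * (A k)ᴴ).trace = star ((S * Sᴴ).trace) := by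
    rw [← e2, star_sum]
    refine Finset.sum_congr rfl fun k _ => ?_
    rw [← trace_conjTranspose]
    congr 1
    simp [conjTranspose_mul, Matrix.mul_assoc]
  have e4 : ∑ k, (S * (A k * (A k)ᴴ) * Sᴴ).trace = (S * Sᴴ).trace := by
    rw [← trace_sum, ← Finset.sum_mul, ← Finset.mul_sum, hu, Matrix.mul_one]
  have hstar : star ((S * Sᴴ).trace) = (S * Sᴴ).trace := by
    rw [trace_mul_conjTranspose_self', Complex.star_def]
    exact Complex.conj_ofReal _
  simp_rw [expand]
  rw [Finset.sum_add_distrib, Finset.sum_sub_distrib, Finset.sum_sub_distrib, e1, e2, e3, e4,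
    hstar]
  ring

lemma kraus_comm {n m : ℕ} (A : Fin m → Matrix (Fin n) (Fin n) ℂ)
    (htp : ∑ k, (A k)ᴴ * A k = 1) (hu : ∑ k, A k * (A k)ᴴ = 1)
    (S : Matrix (Fin n) (Fin n) ℂ)
    (hS : ∑ k, A k * S * (A k)ᴴ = S) : ∀ k, A k * S = S * A k := by
  intro k
  have h0 := eq_zero_of_sum_trace_zero (fun k => A k * S - S * A k)
    (key_trace_zero A htp hu S hS) k
  exact sub_eq_zero.mp h0

theorem stmt7 {n m : ℕ} (A : Fin m → Matrix (Fin n) (Fin n) ℂ)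
    (htp : ∑ k, (A k)ᴴ * A k = 1) (hu : ∑ k, A k * (A k)ᴴ = 1)
    (S T : Matrix (Fin n) (Fin n) ℂ)
    (hS : ∑ k, A k * S * (A k)ᴴ = S) (hT : ∑ k, A k * T * (A k)ᴴ = T) :
    (∑ k, A k * Sᴴ * (A k)ᴴ = Sᴴ) ∧ (∑ k, A k * (S * T) * (A k)ᴴ = S * T) := by
  constructor
  · have h := congrArg conjTranspose hS
    simpa [conjTranspose_sum, conjTranspose_mul, Matrix.mul_assoc] using h
  · have hc := kraus_comm A htp hu S hS
    calc ∑ k, A k * (S * T) * (A k)ᴴ = ∑ k, S * (A k * T * (A k)ᴴ) := by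
          refine Finset.sum_congr rfl fun k _ => ?_
          rw [← Matrix.mul_assoc, hc k]
          simp [Matrix.mul_assoc]
      _ = S * T := by rw [← Finset.mul_sum, hT]
end

section
/- Let Φ be a unital trace-preserving completely positive map on M_n(ℂ). A Hermitian matrix T satisfies Φ(T) = T if and only if every spectral projection (projection onto an eigenspace) of T satisfies Φ(P) = P. -/
open Matrix BigOperators

private lemma matrix_ext_mulVec' {n : ℕ} {X Y : Matrix (Fin n) (Fin n) ℂ}
    (h : ∀ v, X *ᵥ v = Y *ᵥ v) : X = Y := by
  have : Xᵀ = Yᵀ := funext fun j => by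
    show X.col j = Y.col j
    rw [← mulVec_single_one, ← mulVec_single_one, h]
  simpa using congrArg Matrix.transpose this

private lemma trace_pres' {n m : ℕ} (A : Fin m → Matrix (Fin n) (Fin n) ℂ)
    (htp : ∑ k, (A k)ᴴ * A k = 1) (X : Matrix (Fin n) (Fin n) ℂ) :
    (∑ k, A k * X * (A k)ᴴ).trace = X.trace := by
  rw [trace_sum]
  have : ∀ k, (A k * X * (A k)ᴴ).trace = ((A k)ᴴ * A k * X).trace := by
    intro k
    rw [Matrix.trace_mul_cycle, Matrix.mul_assoc]
  rw [Finset.sum_congr rfl fun k _ => this k, ← trace_sum, ← Finset.sum_mul, htp, one_mul]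

private lemma zero_of_sum_trace' {n m : ℕ} (C : Fin m → Matrix (Fin n) (Fin n) ℂ)
    (h : (∑ k, C k * (C k)ᴴ).trace = 0) : ∀ k, C k = 0 := by
  have hre : ∑ k, ∑ i, ∑ j, Complex.normSq (C k i j) = 0 := by
    have : (∑ k, C k * (C k)ᴴ).trace
        = ((∑ k, ∑ i, ∑ j, Complex.normSq (C k i j) : ℝ) : ℂ) := by
      rw [trace_sum]
      push_cast
      refine Finset.sum_congr rfl fun k _ => ?_
      simp only [Matrix.trace, Matrix.diag, Matrix.mul_apply, Matrix.conjTranspose_apply]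
      refine Finset.sum_congr rfl fun i _ => Finset.sum_congr rfl fun j _ => ?_
      rw [Complex.star_def, Complex.mul_conj]
    rw [this] at h
    exact_mod_cast h
  intro k
  ext i j
  have h1 := (Finset.sum_eq_zero_iff_of_nonneg (fun k _ => Finset.sum_nonneg fun i _ =>
    Finset.sum_nonneg fun j _ => Complex.normSq_nonneg _)).mp hre k (Finset.mem_univ k)
  have h2 := (Finset.sum_eq_zero_iff_of_nonneg (fun i _ =>
    Finset.sum_nonneg fun j _ => Complex.normSq_nonneg _)).mp h1 i (Finset.mem_univ i)
  have h3 := (Finset.sum_eq_zero_iff_of_nonneg (fun j _ => Complex.normSq_nonneg _)).mp h2 j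
    (Finset.mem_univ j)
  simpa using Complex.normSq_eq_zero.mp h3

theorem stmt8 {n m : ℕ} (A : Fin m → Matrix (Fin n) (Fin n) ℂ)
    (htp : ∑ k, (A k)ᴴ * A k = 1) (hu : ∑ k, A k * (A k)ᴴ = 1)
    (T : Matrix (Fin n) (Fin n) ℂ) (hT : Tᴴ = T) :
    (∑ k, A k * T * (A k)ᴴ = T) ↔
      ∀ (μ : ℂ) (P : Matrix (Fin n) (Fin n) ℂ),
        Pᴴ = P → P * P = P →
        (∀ ξ : Fin n → ℂ, T.mulVec ξ = μ • ξ ↔ P.mulVec ξ = ξ) →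
        ∑ k, A k * P * (A k)ᴴ = P := by
  constructor
  · -- Forward direction
    intro hΦ μ P hPh hPid heig
    -- Step 1: the Kraus operators commute with T
    have key : ∑ k, (A k * T - T * A k) * (A k * T - T * A k)ᴴ
        = (∑ k, A k * (T * T) * (A k)ᴴ) - T * T := by
      have expand : ∀ k, (A k * T - T * A k) * (A k * T - T * A k)ᴴ
          = A k * (T * T) * (A k)ᴴ - (A k * T * (A k)ᴴ) * T - T * (A k * T * (A k)ᴴ)
            + T * (A k * (A k)ᴴ) * T := by
        intro k
        simp only [conjTranspose_sub, conjTranspose_mul, hT]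
        noncomm_ring
      rw [Finset.sum_congr rfl fun k _ => expand k]
      simp only [Finset.sum_sub_distrib, Finset.sum_add_distrib, ← Finset.sum_mul,
        ← Finset.mul_sum, hΦ, hu]
      noncomm_ring
    have htr : (∑ k, (A k * T - T * A k) * (A k * T - T * A k)ᴴ).trace = 0 := by
      rw [key, trace_sub, trace_pres' A htp, sub_self]
    have hcz := zero_of_sum_trace' _ htr
    have hcomm : ∀ k, A k * T = T * A k := fun k => sub_eq_zero.mp (hcz k)
    -- Step 2: commuting with T implies commuting with P
    have hBP : ∀ B : Matrix (Fin n) (Fin n) ℂ, B * T = T * B → P * (B * P) = B * P := by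
      intro B hB
      apply matrix_ext_mulVec'
      intro v
      have hPv : P *ᵥ (P *ᵥ v) = P *ᵥ v := by rw [mulVec_mulVec, hPid]
      have hTv : T *ᵥ (P *ᵥ v) = μ • (P *ᵥ v) := (heig _).mpr hPv
      have h5 : T *ᵥ (B *ᵥ (P *ᵥ v)) = μ • (B *ᵥ (P *ᵥ v)) := by
        rw [mulVec_mulVec, ← hB, ← mulVec_mulVec, hTv, mulVec_smul]
      have h6 := (heig _).mp h5
      simp only [← mulVec_mulVec]
      simp only [mulVec_mulVec] at h6 ⊢
      simpa [← Matrix.mul_assoc] using h6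
    have hcomm' : ∀ k, (A k)ᴴ * T = T * (A k)ᴴ := fun k => by
      have := congrArg conjTranspose (hcomm k)
      simp only [conjTranspose_mul, hT] at this
      exact this.symm
    have h9 : ∀ k, P * A k * P = P * A k := fun k => by
      have := congrArg conjTranspose (hBP _ (hcomm' k))
      simpa [conjTranspose_mul, hPh, Matrix.mul_assoc] using this
    have hAP : ∀ k, A k * P = P * A k := fun k =>
      calc A k * P = P * (A k * P) := (hBP _ (hcomm k)).symm
        _ = P * A k * P := by rw [Matrix.mul_assoc]
        _ = P * A k := h9 k
    calc ∑ k, A k * P * (A k)ᴴ = ∑ k, P * (A k * (A k)ᴴ) :=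
          Finset.sum_congr rfl fun k _ => by rw [hAP k, Matrix.mul_assoc]
      _ = P * ∑ k, A k * (A k)ᴴ := by rw [Finset.mul_sum]
      _ = P := by rw [hu, mul_one]
  · -- Reverse direction
    intro hfix
    have hH : T.IsHermitian := hT
    set U : Matrix (Fin n) (Fin n) ℂ := (hH.eigenvectorUnitary : Matrix (Fin n) (Fin n) ℂ)
      with hUdef
    set e : Fin n → ℝ := hH.eigenvalues with hedef
    have hU1 : Uᴴ * U = 1 := by
      rw [← Matrix.star_eq_conjTranspose]
      exact Matrix.mem_unitaryGroup_iff'.mp hH.eigenvectorUnitary.prop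
    have hU2 : U * Uᴴ = 1 := by
      rw [← Matrix.star_eq_conjTranspose]
      exact Matrix.mem_unitaryGroup_iff.mp hH.eigenvectorUnitary.prop
    have spec : T = U * diagonal (fun i => ((e i : ℝ) : ℂ)) * Uᴴ := by
      have := hH.spectral_theorem
      rw [← Matrix.star_eq_conjTranspose]
      exact this
    have hUinj : Function.Injective (fun v => U *ᵥ v) := by
      intro x y hxy
      have := congrArg (fun w => Uᴴ *ᵥ w) hxy
      simpa [mulVec_mulVec, hU1] using this
    -- the spectral projections
    set D : ℂ → Matrix (Fin n) (Fin n) ℂ :=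
      fun μ => diagonal (fun i => if ((e i : ℝ) : ℂ) = μ then 1 else 0) with hDdef
    set P : ℂ → Matrix (Fin n) (Fin n) ℂ := fun μ => U * D μ * Uᴴ with hPdef
    have hPh : ∀ μ, (P μ)ᴴ = P μ := by
      intro μ
      have hDh : (D μ)ᴴ = D μ := by
        simp only [hDdef, diagonal_conjTranspose]
        refine congrArg diagonal (funext fun i => ?_)
        by_cases h : ((e i : ℝ) : ℂ) = μ <;> simp [h]
      simp only [hPdef]
      simp only [conjTranspose_mul, conjTranspose_conjTranspose, hDh, Matrix.mul_assoc]
    have hPid : ∀ μ, P μ * P μ = P μ := by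
      intro μ
      have hDD : D μ * D μ = D μ := by
        simp only [hDdef, diagonal_mul_diagonal]
        refine congrArg diagonal (funext fun i => ?_)
        by_cases h : ((e i : ℝ) : ℂ) = μ <;> simp [h]
      simp only [hPdef]
      simp only [Matrix.mul_assoc]
      rw [← Matrix.mul_assoc Uᴴ U, hU1, one_mul, ← Matrix.mul_assoc (D μ) (D μ), hDD]
    have heig : ∀ μ (ξ : Fin n → ℂ), T *ᵥ ξ = μ • ξ ↔ (P μ) *ᵥ ξ = ξ := by
      intro μ ξ
      set η := Uᴴ *ᵥ ξ with hη
      have hξ : U *ᵥ η = ξ := by rw [hη, mulVec_mulVec, hU2, one_mulVec]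
      have l1 : T *ᵥ ξ = U *ᵥ ((diagonal (fun i => ((e i : ℝ) : ℂ))) *ᵥ η) := by
        rw [spec, Matrix.mul_assoc, ← mulVec_mulVec, ← mulVec_mulVec]
      have l2 : μ • ξ = U *ᵥ (μ • η) := by rw [mulVec_smul, hξ]
      have l3 : (P μ) *ᵥ ξ = U *ᵥ (D μ *ᵥ η) := by
        simp only [hPdef]
        rw [Matrix.mul_assoc, ← mulVec_mulVec, ← mulVec_mulVec]
      have hcancel : ∀ x y : Fin n → ℂ, (U *ᵥ x = U *ᵥ y) ↔ x = y :=
        fun x y => ⟨fun h => hUinj h, fun h => by rw [h]⟩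
      rw [l1, l2, l3, ← hξ, hcancel, hcancel, funext_iff, funext_iff]
      refine forall_congr' fun i => ?_
      simp only [hDdef, mulVec_diagonal, Pi.smul_apply, smul_eq_mul]
      by_cases h : ((e i : ℝ) : ℂ) = μ
      · simp [h]
      · simp only [if_neg h]
        constructor
        · intro h2
          have : (((e i : ℝ) : ℂ) - μ) * η i = 0 := by rw [sub_mul, h2, sub_self]
          rcases mul_eq_zero.mp this with h3 | h3
          · exact absurd (sub_eq_zero.mp h3) h
          · simp [h3]
        · intro h2
          have : η i = 0 := by simpa using h2.symm
          simp [this]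
    -- decomposition of T
    set S : Finset ℂ := Finset.image (fun i => ((e i : ℝ) : ℂ)) Finset.univ with hSdef
    have hdec : T = ∑ μ ∈ S, μ • P μ := by
      have hDsum : ∑ μ ∈ S, μ • D μ = diagonal (fun i => ((e i : ℝ) : ℂ)) := by
        ext i j
        rcases eq_or_ne i j with rfl | hij
        · simp only [hDdef, Matrix.sum_apply, Matrix.smul_apply, diagonal_apply_eq,
            smul_eq_mul, mul_ite, mul_one, mul_zero]
          rw [Finset.sum_ite_eq S ((e i : ℝ) : ℂ) (fun μ => μ)]
          simp [hSdef]
        · simp [hDdef, Matrix.sum_apply, diagonal_apply_ne _ hij]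
      calc T = U * (∑ μ ∈ S, μ • D μ) * Uᴴ := by rw [hDsum]; exact spec
        _ = ∑ μ ∈ S, μ • P μ := by
            simp only [hPdef]
            simp only [Finset.mul_sum, Finset.sum_mul, mul_smul_comm, smul_mul_assoc]
    have hfixP : ∀ μ ∈ S, ∑ k, A k * P μ * (A k)ᴴ = P μ := fun μ _ =>
      hfix μ (P μ) (hPh μ) (hPid μ) (heig μ)
    calc ∑ k, A k * T * (A k)ᴴ = ∑ k, A k * (∑ μ ∈ S, μ • P μ) * (A k)ᴴ := by rw [← hdec]
      _ = ∑ k, ∑ μ ∈ S, μ • (A k * P μ * (A k)ᴴ) := by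
          refine Finset.sum_congr rfl fun k _ => ?_
          rw [Finset.mul_sum, Finset.sum_mul]
          exact Finset.sum_congr rfl fun μ _ => by rw [mul_smul_comm, smul_mul_assoc]
      _ = ∑ μ ∈ S, μ • ∑ k, A k * P μ * (A k)ᴴ := by
          rw [Finset.sum_comm]
          exact Finset.sum_congr rfl fun μ _ => (Finset.smul_sum).symm
      _ = ∑ μ ∈ S, μ • P μ := Finset.sum_congr rfl fun μ hμ => by rw [hfixP μ hμ]
      _ = T := hdec.symm
end
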